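/- Let 𝔓 be a self-dual cone in a complex Hilbert space ℌ, let A be a bounded linear operator on ℌ that is ergodic w.r.t. 𝔓, let n ≥ 1, and let B be a bounded linear operator on ℂⁿ that is ergodic w.r.t. the nonnegative orthant ℝ₊ⁿ, with matrix entries B_{ij} = ⟨eᵢ, Beⱼ⟩ in the standard basis. Then the bounded operator C on ℌⁿ defined by (Cξ)ᵢ = Aξᵢ + Σⱼ B_{ij} ξⱼ (that is, C = A ⊗ 1 + 1 ⊗ B) is ergodic w.r.t. the product cone 𝔔 = {ξ ∈ ℌⁿ : ξᵢ ∈ 𝔓 for all i}. -/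

import Mathlib

open scoped ComplexOrder

noncomputable section

variable {H : Type*} [NormedAddCommGroup H] [InnerProductSpace ℂ H]

/-- A self-dual cone in a complex Hilbert space: a closed convex subset,
stable under multiplication by nonnegative reals, equal to its dual cone. -/
def IsSelfDualCone (P : Set H) : Prop :=
  IsClosed P ∧ Convex ℝ P ∧ (∀ t : ℝ, 0 ≤ t → ∀ x ∈ P, t • x ∈ P) ∧
    P = {η : H | ∀ ξ ∈ P, 0 ≤ (inner ℂ η ξ : ℂ)}

/-- `A ⊵ 0` w.r.t. `P`: the operator `A` preserves the positivity. -/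
def PosPres (P : Set H) (A : H →L[ℂ] H) : Prop := ∀ x ∈ P, A x ∈ P

/-- `η > 0` w.r.t. `P`: the vector `η` is strictly positive. -/
def StrictPos (P : Set H) (η : H) : Prop :=
  η ∈ P ∧ ∀ ξ ∈ P, ξ ≠ 0 → 0 < (inner ℂ ξ η : ℂ)

/-- `A ⊳ 0` w.r.t. `P`: the operator `A` improves the positivity. -/
def PosImp (P : Set H) (A : H →L[ℂ] H) : Prop :=
  ∀ ξ ∈ P, ξ ≠ 0 → StrictPos P (A ξ)

/-- `E(A)`: the infimum of the (real) spectrum of `A`. -/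
def specInf (A : H →L[ℂ] H) : ℝ := sInf {t : ℝ | (t : ℂ) ∈ spectrum ℂ A}

/-- `B` is ergodic w.r.t. `P`. -/
def IsErgodic (P : Set H) (B : H →L[ℂ] H) : Prop :=
  PosPres P B ∧ ∀ ξ ∈ P, ξ ≠ 0 → ∀ η ∈ P, η ≠ 0 → ∃ k : ℕ, 0 < (inner ℂ ξ ((B ^ k) η) : ℂ)

/-!
The operators `A ⊗ 1` and `1 ⊗ B` commute, so `C ^ (m + l)` is a sum, with positive binomial
weights, of the positivity preserving operators `A ^ a ⊗ B ^ b`, among them `A ^ m ⊗ B ^ l`.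
For nonzero `ξ, η` in the product cone pick `i, j` with `ξ i ≠ 0`, `η j ≠ 0`, then `m` with
`0 < ⟪ξ i, A ^ m (η j)⟫` and `l` with `0 < (B ^ l) i j`: the expansion
`⟪ξ, (A ^ m ⊗ B ^ l) η⟫ = ∑ i j, (B ^ l) i j * ⟪ξ i, A ^ m (η j)⟫` has a positive term and no
negative one.
-/

namespace IsSelfDualCone

variable {P : Set H}

lemma mem_iff (hP : IsSelfDualCone P) {x : H} : x ∈ P ↔ ∀ ξ ∈ P, 0 ≤ (inner ℂ x ξ : ℂ) :=
  Set.ext_iff.1 hP.2.2.2 x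

lemma inner_nonneg (hP : IsSelfDualCone P) {x y : H} (hx : x ∈ P) (hy : y ∈ P) :
    0 ≤ (inner ℂ x y : ℂ) :=
  hP.mem_iff.1 hx y hy

lemma add_mem (hP : IsSelfDualCone P) {x y : H} (hx : x ∈ P) (hy : y ∈ P) : x + y ∈ P :=
  hP.mem_iff.2 fun ξ hξ => by
    rw [inner_add_left]
    exact add_nonneg (hP.inner_nonneg hx hξ) (hP.inner_nonneg hy hξ)

lemma sum_smul_mem (hP : IsSelfDualCone P) {ι : Type*} (s : Finset ι) {c : ι → ℂ} {x : ι → H}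
    (hc : ∀ i ∈ s, 0 ≤ c i) (hx : ∀ i ∈ s, x i ∈ P) : ∑ i ∈ s, c i • x i ∈ P :=
  hP.mem_iff.2 fun ξ hξ => by
    rw [sum_inner]
    refine Finset.sum_nonneg fun i hi => ?_
    rw [inner_smul_left, (IsSelfAdjoint.of_nonneg (hc i hi)).conj_eq]
    exact mul_nonneg (hc i hi) (hP.inner_nonneg (hx i hi) hξ)

end IsSelfDualCone

lemma PosPres.pow {P : Set H} {A : H →L[ℂ] H} (hA : PosPres P A) (m : ℕ) : PosPres P (A ^ m) := by
  induction m with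
  | zero => exact fun x hx => hx
  | succ m ih => intro x hx; rw [pow_succ']; exact hA _ (ih x hx)

section TensorOp

variable {ι : Type*} [Fintype ι]

/-- `T ⊗ N` on `PiLp 2 (fun _ : ι => H) ≅ H ⊗ ℂ^ι`. -/
def tensorOp (T : H →L[ℂ] H) (N : Matrix ι ι ℂ) :
    PiLp 2 (fun _ : ι => H) →L[ℂ] PiLp 2 (fun _ : ι => H) :=
  (PiLp.continuousLinearEquiv 2 ℂ (fun _ : ι => H)).symm.toContinuousLinearMap ∘L
    ContinuousLinearMap.pi (fun i => ∑ j, N i j • T ∘L ContinuousLinearMap.proj j) ∘L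
    (PiLp.continuousLinearEquiv 2 ℂ (fun _ : ι => H)).toContinuousLinearMap

@[simp]
lemma tensorOp_apply (T : H →L[ℂ] H) (N : Matrix ι ι ℂ) (ξ : PiLp 2 (fun _ : ι => H)) (i : ι) :
    tensorOp T N ξ i = ∑ j, N i j • T (ξ j) := by
  simp [tensorOp]

lemma tensorOp_mul (T S : H →L[ℂ] H) (N N' : Matrix ι ι ℂ) :
    tensorOp T N * tensorOp S N' = tensorOp (T * S) (N * N') := by
  ext ξ i
  simp only [mul_apply_eq_comp, tensorOp_apply, map_sum, map_smul, Finset.smul_sum,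
    smul_smul, Matrix.mul_apply, Finset.sum_smul]
  exact Finset.sum_comm

lemma tensorOp_one [DecidableEq ι] : tensorOp (1 : H →L[ℂ] H) (1 : Matrix ι ι ℂ) = 1 := by
  ext ξ i
  simp [Matrix.one_apply]

lemma tensorOp_pow [DecidableEq ι] (T : H →L[ℂ] H) (N : Matrix ι ι ℂ) (k : ℕ) :
    tensorOp T N ^ k = tensorOp (T ^ k) (N ^ k) := by
  induction k with
  | zero => exact tensorOp_one.symm
  | succ k ih => rw [pow_succ, ih, tensorOp_mul, ← pow_succ, ← pow_succ]

open Finset in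
lemma tensorOp_add_pow [DecidableEq ι] (T : H →L[ℂ] H) (N : Matrix ι ι ℂ) (k : ℕ) :
    (tensorOp T 1 + tensorOp 1 N) ^ k =
      ∑ p ∈ antidiagonal k, k.choose p.1 • tensorOp (T ^ p.1) (N ^ p.2) := by
  have hcomm : Commute (tensorOp T 1) (tensorOp 1 N) := by
    simp only [Commute, SemiconjBy, tensorOp_mul, mul_one, one_mul]
  simp only [hcomm.add_pow', tensorOp_pow, tensorOp_mul, one_pow, mul_one, one_mul]

lemma inner_tensorOp (T : H →L[ℂ] H) (N : Matrix ι ι ℂ) (ξ η : PiLp 2 (fun _ : ι => H)) :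
    inner ℂ ξ (tensorOp T N η) = ∑ i, ∑ j, N i j * inner ℂ (ξ i) (T (η j)) := by
  simp only [PiLp.inner_apply, tensorOp_apply, inner_sum, inner_smul_right]

variable {P : Set H} {T : H →L[ℂ] H} {N : Matrix ι ι ℂ}

lemma posPres_tensorOp (hP : IsSelfDualCone P) (hT : PosPres P T) (hN : ∀ i j, 0 ≤ N i j) :
    PosPres {ξ : PiLp 2 (fun _ : ι => H) | ∀ i, ξ i ∈ P} (tensorOp T N) := fun ξ hξ i => by
  rw [tensorOp_apply]
  exact hP.sum_smul_mem _ (fun j _ => hN i j) (fun j _ => hT _ (hξ j))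

lemma inner_tensorOp_nonneg (hP : IsSelfDualCone P) (hT : PosPres P T) (hN : ∀ i j, 0 ≤ N i j)
    {ξ η : PiLp 2 (fun _ : ι => H)} (hξ : ∀ i, ξ i ∈ P) (hη : ∀ i, η i ∈ P) :
    0 ≤ inner ℂ ξ (tensorOp T N η) := by
  rw [inner_tensorOp]
  exact Finset.sum_nonneg fun i _ => Finset.sum_nonneg fun j _ =>
    mul_nonneg (hN i j) (hP.inner_nonneg (hξ i) (hT _ (hη j)))

lemma inner_tensorOp_pos (hP : IsSelfDualCone P) (hT : PosPres P T) (hN : ∀ i j, 0 ≤ N i j)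
    {ξ η : PiLp 2 (fun _ : ι => H)} (hξ : ∀ i, ξ i ∈ P) (hη : ∀ i, η i ∈ P) {i j : ι}
    (hNij : 0 < N i j) (hTij : 0 < inner ℂ (ξ i) (T (η j))) :
    0 < inner ℂ ξ (tensorOp T N η) := by
  have hterm : ∀ i' j', 0 ≤ N i' j' * inner ℂ (ξ i') (T (η j')) := fun i' j' =>
    mul_nonneg (hN i' j') (hP.inner_nonneg (hξ i') (hT _ (hη j')))
  rw [inner_tensorOp]
  calc (0 : ℂ) < N i j * inner ℂ (ξ i) (T (η j)) := mul_pos hNij hTij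
    _ ≤ ∑ j', N i j' * inner ℂ (ξ i) (T (η j')) :=
      Finset.single_le_sum (fun j' _ => hterm i j') (Finset.mem_univ j)
    _ ≤ ∑ i', ∑ j', N i' j' * inner ℂ (ξ i') (T (η j')) :=
      Finset.single_le_sum (fun i' _ => Finset.sum_nonneg fun j' _ => hterm i' j')
        (Finset.mem_univ i)

theorem IsErgodic.tensorOp_add [DecidableEq ι] (hP : IsSelfDualCone P) (hT : IsErgodic P T)
    (hN : ∀ i j, 0 ≤ N i j) (hirr : ∀ i j, ∃ l, 0 < (N ^ l) i j) :
    IsErgodic {ξ : PiLp 2 (fun _ : ι => H) | ∀ i, ξ i ∈ P} (tensorOp T 1 + tensorOp 1 N) := by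
  refine ⟨fun ξ hξ i => ?_, fun ξ hξ hξ0 η hη hη0 => ?_⟩
  · exact hP.add_mem (posPres_tensorOp hP hT.1 (Matrix.pow_apply_nonneg hN 0) ξ hξ i)
      (posPres_tensorOp hP (fun x hx => hx) hN ξ hξ i)
  obtain ⟨i, hi⟩ : ∃ i, ξ i ≠ 0 := Function.ne_iff.1 ((WithLp.ofLp_eq_zero 2).not.2 hξ0)
  obtain ⟨j, hj⟩ : ∃ j, η j ≠ 0 := Function.ne_iff.1 ((WithLp.ofLp_eq_zero 2).not.2 hη0)
  obtain ⟨m, hm⟩ := hT.2 _ (hξ i) hi _ (hη j) hj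
  obtain ⟨l, hl⟩ := hirr i j
  refine ⟨m + l, ?_⟩
  rw [tensorOp_add_pow, _root_.sum_apply, inner_sum]
  refine Finset.sum_pos' (fun p _ => ?_) ⟨(m, l), Finset.HasAntidiagonal.mem_antidiagonal.2 rfl, ?_⟩
  · rw [smul_apply, inner_smul_right_eq_smul]
    exact nsmul_nonneg
      (inner_tensorOp_nonneg hP (hT.1.pow _) (Matrix.pow_apply_nonneg hN _) hξ hη) _
  · rw [smul_apply, inner_smul_right_eq_smul]
    exact nsmul_pos (inner_tensorOp_pos hP (hT.1.pow m) (Matrix.pow_apply_nonneg hN l) hξ hη hl hm)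
      (Nat.choose_pos (Nat.le_add_right m l)).ne'

end TensorOp

lemma Matrix.toEuclideanCLM_symm_apply {ι : Type*} [Fintype ι] [DecidableEq ι]
    (B : EuclideanSpace ℂ ι →L[ℂ] EuclideanSpace ℂ ι) (i j : ι) :
    (Matrix.toEuclideanCLM (n := ι) (𝕜 := ℂ)).symm B i j =
      inner ℂ (EuclideanSpace.single i (1 : ℂ)) (B (EuclideanSpace.single j 1)) := by
  set M := (Matrix.toEuclideanCLM (n := ι) (𝕜 := ℂ)).symm B
  have hB : B = Matrix.toEuclideanCLM (n := ι) (𝕜 := ℂ) M :=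
    (StarAlgEquiv.apply_symm_apply _ B).symm
  rw [hB]
  simp [EuclideanSpace.inner_single_left]

section Orthant

variable {ι : Type*} [DecidableEq ι]

lemma EuclideanSpace.single_one_nonneg (i k : ι) : 0 ≤ EuclideanSpace.single i (1 : ℂ) k := by
  rw [PiLp.single_apply]
  split_ifs <;> simp

variable [Fintype ι] {B : EuclideanSpace ℂ ι →L[ℂ] EuclideanSpace ℂ ι}

lemma PosPres.toEuclideanCLM_symm_apply_nonneg
    (hB : PosPres {x : EuclideanSpace ℂ ι | ∀ i, 0 ≤ x i} B) (i j : ι) :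
    0 ≤ (Matrix.toEuclideanCLM (n := ι) (𝕜 := ℂ)).symm B i j := by
  rw [Matrix.toEuclideanCLM_symm_apply, EuclideanSpace.inner_single_left, map_one, one_mul]
  exact hB _ (EuclideanSpace.single_one_nonneg j) i

lemma IsErgodic.exists_pow_toEuclideanCLM_symm_apply_pos
    (hB : IsErgodic {x : EuclideanSpace ℂ ι | ∀ i, 0 ≤ x i} B) (i j : ι) :
    ∃ l, 0 < ((Matrix.toEuclideanCLM (n := ι) (𝕜 := ℂ)).symm B ^ l) i j := by
  have hsingle (k : ι) : EuclideanSpace.single k (1 : ℂ) ≠ 0 := by simp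
  obtain ⟨l, hl⟩ := hB.2 _ (EuclideanSpace.single_one_nonneg i) (hsingle i)
    _ (EuclideanSpace.single_one_nonneg j) (hsingle j)
  exact ⟨l, by rwa [← map_pow, Matrix.toEuclideanCLM_symm_apply]⟩

end Orthant

theorem ergodic_tensor_sum_general (P : Set H) (hP : IsSelfDualCone P)
    (A : H →L[ℂ] H) (hA : IsErgodic P A) (n : ℕ)
    (B : EuclideanSpace ℂ (Fin n) →L[ℂ] EuclideanSpace ℂ (Fin n))
    (hB : IsErgodic {x : EuclideanSpace ℂ (Fin n) | ∀ i, 0 ≤ x i} B)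
    (C : PiLp 2 (fun _ : Fin n => H) →L[ℂ] PiLp 2 (fun _ : Fin n => H))
    (hC : ∀ (ξ : PiLp 2 (fun _ : Fin n => H)) (i : Fin n),
      C ξ i = A (ξ i) + ∑ j : Fin n,
        (inner ℂ (EuclideanSpace.single i (1 : ℂ)) (B (EuclideanSpace.single j (1 : ℂ))) : ℂ)
          • ξ j) :
    IsErgodic {ξ : PiLp 2 (fun _ : Fin n => H) | ∀ i, ξ i ∈ P} C := by
  have hCB :
      C = tensorOp A 1 + tensorOp 1 ((Matrix.toEuclideanCLM (n := Fin n) (𝕜 := ℂ)).symm B) := by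
    ext ξ i
    simp [hC, Matrix.toEuclideanCLM_symm_apply, Matrix.one_apply]
  rw [hCB]
  exact hA.tensorOp_add hP hB.1.toEuclideanCLM_symm_apply_nonneg
    hB.exists_pow_toEuclideanCLM_symm_apply_pos

/-- Proposition A.9 (composition of ergodic operators): if `A` is ergodic w.r.t. `P`
and `B` (an operator on `ℂⁿ`) is ergodic w.r.t. the nonnegative orthant `ℝ₊ⁿ`, then
`C = A ⊗ 1 + 1 ⊗ B`, acting on `ℌⁿ ≅ ℌ ⊗ ℂⁿ` by
`(Cξ)ᵢ = Aξᵢ + Σⱼ Bᵢⱼ ξⱼ`, is ergodic w.r.t. the product cone. -/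
theorem ergodic_tensor_sum (P : Set H) (hP : IsSelfDualCone P)
    (A : H →L[ℂ] H) (hA : IsErgodic P A) (n : ℕ) (hn : 1 ≤ n)
    (B : EuclideanSpace ℂ (Fin n) →L[ℂ] EuclideanSpace ℂ (Fin n))
    (hB : IsErgodic {x : EuclideanSpace ℂ (Fin n) | ∀ i, 0 ≤ x i} B)
    (C : PiLp 2 (fun _ : Fin n => H) →L[ℂ] PiLp 2 (fun _ : Fin n => H))
    (hC : ∀ (ξ : PiLp 2 (fun _ : Fin n => H)) (i : Fin n),
      C ξ i = A (ξ i) + ∑ j : Fin n,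
        (inner ℂ (EuclideanSpace.single i (1 : ℂ)) (B (EuclideanSpace.single j (1 : ℂ))) : ℂ)
          • ξ j) :
    IsErgodic {ξ : PiLp 2 (fun _ : Fin n => H) | ∀ i, ξ i ∈ P} C :=
  ergodic_tensor_sum_general P hP A hA n B hB C hC
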